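/- arXiv:2311.02843 — 2 statements merged into one kernel-verified Lean document; each statement's English description precedes it below -/
import Mathlib

section
/- The dimension of the irreducible representation of S_n indexed by λ = (μ₁, μ₂, 2^{r-2}, 1^{l-r}) with μ₁ ≥ μ₂ ≥ 2 and l ≥ r ≥ 2 equals n!·(μ₁-μ₂+1)·(l-r+1) / [(μ₁+l-1)(μ₁+r-2)(μ₂+l-2)(μ₂+r-3)·(μ₁-1)!·(μ₂-2)!·(l-1)!·(r-2)!]. -/
/-!
At the identity the Murnaghan–Nakayama recursion is the branching rule: `MN (1ⁿ) S` is the sum of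
`MN (1ⁿ⁻¹) S'` over the beta-sets `S'` obtained by lowering one `b ∈ S` to `b - 1 ∉ S`. The
hook-length formula `MN (1ⁿ) S = n! / H(S)` follows by induction on `n`: writing
`H(S) = ∏ b! / Δ(S)` with `Δ` the Vandermonde product, the induction step is the identity
`∑_{b ∈ S} b ∏_{a ≠ b} (b - a - 1) / (b - a) = ∑ S - (#S choose 2)`. This is Lagrange
interpolation for the coefficient of `X^{k-1}` in `X (f(X - 1) - f(X)) + k f(X)`, where
`f = ∏_{a ∈ S} (X - a)` and `k = #S`; that polynomial has degree `< k`.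
For the near-hook, `S = {μ₁ + l - 1, μ₂ + l - 2} ∪ ([1, l) \ {l - r + 1})`, and `H(S)` is computed
row by row.
-/

/-- The beta-set (set of first-column hook lengths) of a partition given as a list of parts. -/
def betaSet (lam : List ℕ) : Finset ℕ :=
  Finset.image (fun i : Fin lam.length => lam.get i + (lam.length - 1 - i.1)) Finset.univ

/-- Murnaghan–Nakayama rule: `MN μ S` is the character of the irreducible representation of
the symmetric group whose Young diagram has beta-set `S`, evaluated at permutations of cycle
type `μ`, computed by iteratively removing border strips from the beta-set. -/
def MN : List ℕ → Finset ℕ → ℤ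
  | [], _ => 1
  | m :: rest, S =>
      ∑ b ∈ S, if m ≤ b ∧ b - m ∉ S then
        (-1 : ℤ) ^ ((S ∩ Finset.Ioo (b - m) b).card) * MN rest (insert (b - m) (S.erase b))
      else 0

/-- The hook partition `(k, 1^{n-k})` of `n`, as a list of parts. -/
def hookPartition (n k : ℕ) : List ℕ := k :: List.replicate (n - k) 1

open Finset

namespace Lagrange

open Polynomial

variable {F ι : Type*} [Field F] (s : Finset ι) (v : ι → F)

theorem degree_nodal_add_one_sub_nodal_lt : (nodal s (v · + 1) - nodal s v).degree < #s := by
  rw [← degree_nodal (v := fun i => v i + 1)]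
  exact degree_sub_lt_left (by rw [degree_nodal, degree_nodal]) nodal_ne_zero
    (by rw [nodal_monic.leadingCoeff, nodal_monic.leadingCoeff])

theorem coeff_nodal_add_one_sub_nodal_card_sub_one (hs : 0 < #s) :
    (nodal s (v · + 1) - nodal s v).coeff (#s - 1) = -#s := by
  rw [coeff_sub, nodal_eq, nodal_eq, prod_X_sub_C_coeff_card_pred s _ hs,
    prod_X_sub_C_coeff_card_pred s _ hs, sum_add_distrib, sum_const, nsmul_one]
  ring

theorem degree_X_mul_nodal_add_one_sub_nodal_add_lt :
    (X * (nodal s (v · + 1) - nodal s v) + C (#s : F) * nodal s v).degree < (#s : WithBot ℕ) := by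
  rcases (#s).eq_zero_or_pos with h0 | hpos
  · simp [card_eq_zero.mp h0]
  rw [degree_lt_iff_coeff_zero]
  intro m hm
  obtain ⟨m, rfl⟩ : ∃ m', m = m' + 1 := ⟨m - 1, by omega⟩
  rw [coeff_add, coeff_X_mul, coeff_C_mul]
  rcases hm.eq_or_lt with hm | hm
  · have hf : (nodal s v).coeff #s = 1 := by
      simpa [natDegree_nodal] using (nodal_monic (s := s) (v := v)).coeff_natDegree
    obtain rfl : m = #s - 1 := by omega
    rw [show #s - 1 + 1 = #s by omega, coeff_nodal_add_one_sub_nodal_card_sub_one s v hpos, hf]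
    ring
  · rw [coeff_eq_zero_of_degree_lt ((degree_nodal_add_one_sub_nodal_lt s v).trans_le
      (by exact_mod_cast (by omega : #s ≤ m))), coeff_eq_zero_of_natDegree_lt
      (by rw [natDegree_nodal]; omega), zero_add, mul_zero]

variable [DecidableEq ι]

theorem coeff_nodal_add_one_sub_nodal_of_card_eq_add_two {j : ℕ} (hj : #s = j + 2) :
    (nodal s (v · + 1) - nodal s v).coeff j = (j + 1) * ∑ i ∈ s, v i + ((#s).choose 2 : F) := by
  induction s using Finset.induction_on generalizing j with
  | empty => simp at hj
  | @insert c s hc ih =>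
    rw [card_insert_of_notMem hc] at hj
    have hstep : nodal (insert c s) (v · + 1) - nodal (insert c s) v
        = (X - C (v c)) * (nodal s (v · + 1) - nodal s v) - nodal s (v · + 1) := by
      rw [nodal_insert_eq_nodal hc, nodal_insert_eq_nodal hc, C_add, C_1]
      ring
    have hfp : (nodal s (v · + 1)).coeff (#s - 1) = -(∑ i ∈ s, v i + #s) := by
      rw [nodal_eq, prod_X_sub_C_coeff_card_pred s _ (by omega), sum_add_distrib, sum_const,
        nsmul_one]
    have hg := coeff_nodal_add_one_sub_nodal_card_sub_one s v (by omega)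
    rw [hstep, sub_mul, coeff_sub, coeff_sub, coeff_C_mul, sum_insert hc,
      card_insert_of_notMem hc]
    rcases j with _ | m
    · obtain ⟨d, rfl⟩ := card_eq_one.mp (by omega : #s = 1)
      simp only [card_singleton, Nat.sub_self] at hfp hg
      simp only [mul_coeff_zero, coeff_X_zero, hg, hfp, card_singleton, sum_singleton,
        Nat.choose_self, Nat.cast_zero, Nat.cast_one]
      ring
    · have hs : #s = m + 2 := by omega
      rw [hs, show m + 2 - 1 = m + 1 by omega] at hfp hg
      rw [coeff_X_mul, ih hs, hg, hfp, hs, Nat.choose_succ_succ' (m + 2), Nat.choose_one_right]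
      push_cast
      ring

theorem coeff_X_mul_nodal_add_one_sub_nodal_add {k : ℕ} (hk : #s = k + 2) :
    (X * (nodal s (v · + 1) - nodal s v) + C (#s : F) * nodal s v).coeff (k + 1)
      = ((#s).choose 2 : F) - ∑ i ∈ s, v i := by
  have hf : (nodal s v).coeff (k + 1) = -∑ i ∈ s, v i := by
    rw [nodal_eq, show k + 1 = #s - 1 by omega, prod_X_sub_C_coeff_card_pred s _ (by omega)]
  rw [coeff_add, coeff_X_mul, coeff_C_mul, coeff_nodal_add_one_sub_nodal_of_card_eq_add_two s v hk,
    hf, hk]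
  push_cast
  ring

theorem sum_mul_prod_sub_sub_one_div (hvs : Set.InjOn v s) :
    ∑ i ∈ s, v i * ∏ j ∈ s.erase i, (v i - v j - 1) / (v i - v j)
      = ∑ i ∈ s, v i - ((#s).choose 2 : F) := by
  obtain h0 | h1 | ⟨k, hk⟩ : #s = 0 ∨ #s = 1 ∨ ∃ k, #s = k + 2 := by
    rcases #s with _ | _ | k <;> simp
  · simp [card_eq_zero.mp h0]
  · obtain ⟨d, rfl⟩ := card_eq_one.mp h1
    simp
  have hinterp := coeff_eq_sum hvs (degree_X_mul_nodal_add_one_sub_nodal_add_lt s v)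
  rw [show #s - 1 = k + 1 by omega, coeff_X_mul_nodal_add_one_sub_nodal_add s v hk] at hinterp
  have heval : ∀ i ∈ s, (X * (nodal s (v · + 1) - nodal s v) + C (#s : F) * nodal s v).eval (v i)
      / ∏ j ∈ s.erase i, (v i - v j) = -(v i * ∏ j ∈ s.erase i, (v i - v j - 1) / (v i - v j)) := by
    intro i hi
    simp only [eval_add, eval_mul, eval_X, eval_C, eval_sub, eval_nodal_at_node hi, eval_nodal,
      ← mul_prod_erase s _ hi, sub_add_eq_sub_sub, prod_div_distrib]
    ring
  rw [sum_congr rfl heval, sum_neg_distrib] at hinterp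
  linear_combination hinterp

end Lagrange

open scoped Nat

/-- For a beta-set `S`, the hook lengths of the corresponding partition are the differences
`b - c` with `b ∈ S`, `c ∉ S`, `c < b`; `rowHookProd S b` collects those of the row of `b`. -/
def rowHookProd (S : Finset ℕ) (b : ℕ) : ℕ := ∏ c ∈ range b \ S, (b - c)

def hookProd (S : Finset ℕ) : ℕ := ∏ b ∈ S, rowHookProd S b

def vandermondeProd (S : Finset ℕ) : ℕ := ∏ b ∈ S, ∏ a ∈ S with a < b, (b - a)

theorem prod_range_sub_eq_factorial (b : ℕ) : ∏ c ∈ range b, (b - c) = b ! := by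
  rw [← Nat.descFactorial_eq_prod_range, Nat.descFactorial_self]

theorem hookProd_pos (S : Finset ℕ) : 0 < hookProd S :=
  prod_pos fun _ _ => prod_pos fun _ hc => Nat.sub_pos_of_lt (mem_range.1 (mem_sdiff.1 hc).1)

theorem vandermondeProd_pos (S : Finset ℕ) : 0 < vandermondeProd S :=
  prod_pos fun _ _ => prod_pos fun _ ha => Nat.sub_pos_of_lt (mem_filter.1 ha).2

theorem hookProd_mul_vandermondeProd (S : Finset ℕ) :
    hookProd S * vandermondeProd S = ∏ b ∈ S, b ! := by
  rw [hookProd, vandermondeProd, ← prod_mul_distrib]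
  refine prod_congr rfl fun b _ => ?_
  have hsub : S.filter (· < b) ⊆ range b := fun a ha => mem_range.2 (mem_filter.1 ha).2
  have hsd : range b \ S = range b \ S.filter (· < b) := by
    ext c; simp only [mem_sdiff, mem_range, mem_filter]; tauto
  rw [rowHookProd, hsd, prod_sdiff hsub, prod_range_sub_eq_factorial]

theorem cast_hookProd_eq_div (S : Finset ℕ) :
    (hookProd S : ℚ) = (∏ b ∈ S, (b ! : ℚ)) / vandermondeProd S := by
  rw [eq_div_iff (by exact_mod_cast (vandermondeProd_pos S).ne'), ← Nat.cast_mul,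
    hookProd_mul_vandermondeProd, Nat.cast_prod]

theorem vandermondeProd_insert {c : ℕ} {T : Finset ℕ} (hc : c ∉ T) :
    vandermondeProd (insert c T) =
      vandermondeProd T * ∏ a ∈ T, (if a < c then c - a else a - c) := by
  have hrow : ∀ b ∈ T, ∏ a ∈ insert c T with a < b, (b - a)
      = (if c < b then b - c else 1) * ∏ a ∈ T with a < b, (b - a) := by
    intro b _
    rw [filter_insert]
    split_ifs
    · rw [prod_insert (fun h => hc (mem_filter.1 h).1)]
    · rw [one_mul]
  rw [vandermondeProd, vandermondeProd, prod_insert hc, filter_insert, if_neg (lt_irrefl c),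
    prod_congr rfl hrow, prod_mul_distrib, prod_ite, prod_ite, prod_const_one, mul_one]
  have hne : T.filter (fun a => ¬a < c) = T.filter (c < ·) :=
    filter_congr fun a ha => by have : a ≠ c := fun h => hc (h ▸ ha); omega
  rw [hne]
  ring

theorem cast_vandermondeProd_insert {c : ℕ} {T : Finset ℕ} (hc : c ∉ T) :
    (vandermondeProd (insert c T) : ℚ) = vandermondeProd T * ∏ a ∈ T, |(c : ℚ) - a| := by
  rw [vandermondeProd_insert hc, Nat.cast_mul, Nat.cast_prod]
  congr 1
  refine prod_congr rfl fun a ha => ?_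
  have hac : a ≠ c := fun h => hc (h ▸ ha)
  split_ifs with h
  · rw [Nat.cast_sub h.le, abs_of_pos (sub_pos.2 (by exact_mod_cast h))]
  · have h' : c < a := by omega
    rw [Nat.cast_sub h'.le, abs_of_neg (sub_neg.2 (by exact_mod_cast h')), neg_sub]

theorem cast_hookProd_insert_eq {T : Finset ℕ} {b : ℕ} (hb₀ : b ≠ 0) (hb : b ∉ T)
    (hb₁ : b - 1 ∉ T) :
    (hookProd (insert b T) : ℚ) =
      hookProd (insert (b - 1) T) * (b * ∏ a ∈ T, ((b : ℚ) - a - 1) / (b - a)) := by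
  have hcast : ((b - 1 : ℕ) : ℚ) = b - 1 := Nat.cast_pred (Nat.pos_of_ne_zero hb₀)
  have hratio : ∀ a ∈ T,
      ((b : ℚ) - a - 1) / (b - a) = |((b - 1 : ℕ) : ℚ) - a| / |(b : ℚ) - a| := by
    intro a ha
    have hab : a ≠ b := fun h => hb (h ▸ ha)
    have hab₁ : a ≠ b - 1 := fun h => hb₁ (h ▸ ha)
    rw [hcast]
    rcases lt_or_gt_of_ne hab with h | h
    · have h' : (a : ℚ) + 1 < b := by exact_mod_cast (by omega : a + 1 < b)
      rw [abs_of_pos (by linarith), abs_of_pos (by linarith), sub_right_comm]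
    · have h' : (b : ℚ) < a := by exact_mod_cast h
      rw [abs_of_neg (by linarith), abs_of_neg (by linarith), neg_div_neg_eq, sub_right_comm]
  have hne : ∀ c ∉ T, ∏ a ∈ T, |(c : ℚ) - a| ≠ 0 := fun c hc =>
    prod_ne_zero_iff.2 fun a ha => abs_ne_zero.2 (sub_ne_zero.2 (by
      exact_mod_cast fun h : c = a => hc (h ▸ ha)))
  have hV : (vandermondeProd T : ℚ) ≠ 0 := by exact_mod_cast (vandermondeProd_pos T).ne'
  rw [prod_congr rfl hratio, prod_div_distrib, cast_hookProd_eq_div, cast_hookProd_eq_div,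
    prod_insert hb, prod_insert hb₁, cast_vandermondeProd_insert hb,
    cast_vandermondeProd_insert hb₁, ← Nat.mul_factorial_pred hb₀]
  have hΔb := hne b hb
  have hΔb₁ := hne _ hb₁
  push_cast
  field_simp

theorem card_insert_pred_erase {S : Finset ℕ} {b : ℕ} (hb : b ∈ S) (hb₁ : b - 1 ∉ S) :
    #(insert (b - 1) (S.erase b)) = #S := by
  rw [card_insert_of_notMem fun h => hb₁ (mem_of_mem_erase h), card_erase_add_one hb]

theorem sum_insert_pred_erase_add_one {S : Finset ℕ} {b : ℕ} (hb : b ∈ S) (hb₀ : b ≠ 0)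
    (hb₁ : b - 1 ∉ S) : ∑ a ∈ insert (b - 1) (S.erase b), a + 1 = ∑ a ∈ S, a := by
  rw [sum_insert fun h => hb₁ (mem_of_mem_erase h), ← add_sum_erase S (fun a => a) hb]
  omega

theorem mul_prod_sub_sub_one_div_eq_zero {S : Finset ℕ} {b : ℕ} (hb : b ∈ S)
    (hb' : ¬(1 ≤ b ∧ b - 1 ∉ S)) :
    (b : ℚ) * ∏ a ∈ S.erase b, ((b : ℚ) - a - 1) / (b - a) = 0 := by
  rcases Nat.eq_zero_or_pos b with rfl | hb₀
  · simp
  · refine mul_eq_zero_of_right _ (prod_eq_zero (i := b - 1) ?_ ?_)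
    · exact mem_erase.2 ⟨by omega, by tauto⟩
    · rw [Nat.cast_pred hb₀]
      ring

theorem sum_range_card_le_sum (S : Finset ℕ) : ∑ i ∈ range #S, i ≤ ∑ b ∈ S, b := by
  have h := sum_range_le_sum (s := S.map Nat.castEmbedding) (c := (0 : ℤ)) (by simp)
  simp only [card_map, zero_add, sum_map, Nat.castEmbedding_apply] at h
  zify
  exact h

theorem eq_range_card_of_sum_le {S : Finset ℕ} (h : ∑ b ∈ S, b ≤ ∑ i ∈ range #S, i) :
    S = range #S := by
  by_contra hne
  obtain ⟨b, hb, hbS⟩ : ∃ b ∈ S, #S ≤ b := by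
    by_contra! hlt
    exact hne (eq_of_subset_of_card_le (fun a ha => mem_range.2 (hlt a ha)) (by simp))
  obtain ⟨k, hk⟩ : ∃ k, #S = k + 1 := ⟨#S - 1, by have := card_pos.2 ⟨b, hb⟩; omega⟩
  have herase := sum_range_card_le_sum (S.erase b)
  rw [card_erase_of_mem hb, hk, Nat.add_sub_cancel] at herase
  have hsplit : b + ∑ a ∈ S.erase b, a = ∑ a ∈ S, a := add_sum_erase S (fun a => a) hb
  rw [hk, sum_range_succ] at h
  omega

theorem hookProd_range (k : ℕ) : hookProd (range k) = 1 :=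
  prod_eq_one fun b hb => prod_eq_one fun c hc => by
    simp only [mem_sdiff, mem_range] at hb hc; omega

theorem sum_range_id_eq_choose_two (k : ℕ) : ∑ i ∈ range k, i = k.choose 2 := by
  rw [sum_range_id, Nat.choose_two_right]

theorem MN_replicate_one_eq_factorial_div_hookProd (n : ℕ) (S : Finset ℕ)
    (h : ∑ b ∈ S, b = n + ∑ i ∈ range #S, i) :
    (MN (List.replicate n 1) S : ℚ) = n ! / hookProd S := by
  induction n generalizing S with
  | zero =>
    rw [eq_range_card_of_sum_le (S := S) (by omega), hookProd_range]
    simp [MN]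
  | succ n ih =>
    have hweights := Lagrange.sum_mul_prod_sub_sub_one_div S (Nat.cast : ℕ → ℚ)
      Nat.cast_injective.injOn
    rw [← Nat.cast_sum, h, sum_range_id_eq_choose_two] at hweights
    push_cast at hweights
    have hterm : ∀ b ∈ S, ((if 1 ≤ b ∧ b - 1 ∉ S then (-1 : ℤ) ^ #(S ∩ Ioo (b - 1) b) *
        MN (List.replicate n 1) (insert (b - 1) (S.erase b)) else 0 : ℤ) : ℚ)
        = n ! / hookProd S * (b * ∏ a ∈ S.erase b, ((b : ℚ) - a - 1) / (b - a)) := by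
      intro b hbS
      by_cases hb : 1 ≤ b ∧ b - 1 ∉ S
      · have hIoo : S ∩ Ioo (b - 1) b = ∅ := by
          ext a; simp only [mem_inter, mem_Ioo, notMem_empty, iff_false]; omega
        have hsum := sum_insert_pred_erase_add_one hbS (by omega) hb.2
        have hhook := cast_hookProd_insert_eq (by omega) (notMem_erase b S)
          fun h => hb.2 (mem_of_mem_erase h)
        rw [insert_erase hbS] at hhook
        have hpos : (hookProd S : ℚ) ≠ 0 := by exact_mod_cast (hookProd_pos S).ne'
        rw [hhook] at hpos
        rw [if_pos hb, hIoo, card_empty, pow_zero, one_mul,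
          ih _ (by rw [card_insert_pred_erase hbS hb.2]; omega), hhook, ← div_div,
          div_mul_cancel₀ _ (right_ne_zero_of_mul hpos)]
      · rw [if_neg hb, Int.cast_zero, mul_prod_sub_sub_one_div_eq_zero hbS hb, mul_zero]
    rw [List.replicate_succ, MN, Int.cast_sum, sum_congr rfl hterm, ← mul_sum, hweights,
      Nat.factorial_succ]
    push_cast
    ring

theorem betaSet_nil : betaSet [] = ∅ := rfl

theorem betaSet_cons (a : ℕ) (L : List ℕ) :
    betaSet (a :: L) = insert (a + L.length) (betaSet L) := by
  ext x
  simp only [betaSet, mem_image, mem_univ, true_and, mem_insert, Fin.exists_fin_succ,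
    List.length_cons, List.get_cons_zero, Fin.val_succ, Fin.val_zero,
    Nat.add_sub_cancel, Nat.sub_zero, Nat.sub_sub, Nat.add_comm 1, eq_comm (a := x)]
  rfl

theorem betaSet_append (L M : List ℕ) :
    betaSet (L ++ M) = (betaSet L).image (· + M.length) ∪ betaSet M := by
  induction L with
  | nil => simp [betaSet_nil]
  | cons a L ih =>
    rw [List.cons_append, betaSet_cons, betaSet_cons, ih, image_insert, insert_union,
      List.length_append, add_assoc]

theorem betaSet_replicate (m a : ℕ) : betaSet (List.replicate m a) = Ico a (a + m) := by
  induction m with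
  | zero => simp [betaSet_nil]
  | succ m ih =>
    rw [List.replicate_succ, betaSet_cons, ih, List.length_replicate, ← add_assoc,
      Nat.Ico_succ_right_eq_insert_Ico (by omega)]

theorem prod_Ico_sub_eq_factorial (l c : ℕ) : ∏ a ∈ Ico l c, (c - a) = (c - l)! := by
  rw [prod_Ico_eq_prod_range, ← prod_range_sub_eq_factorial]
  exact prod_congr rfl fun k _ => by omega

theorem prod_Ico_sub_left_eq_factorial (s l : ℕ) :
    ∏ a ∈ Ico (s + 1) l, (a - s) = (l - 1 - s)! := by
  rw [prod_Ico_eq_prod_range, ← prod_range_add_one_eq_factorial,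
    show l - (s + 1) = l - 1 - s by omega]
  exact prod_congr rfl fun k _ => by omega

theorem hookProd_insert_of_forall_lt {T : Finset ℕ} {c : ℕ} (h : ∀ a ∈ T, a < c) :
    hookProd (insert c T) = hookProd T * rowHookProd T c := by
  have hc : c ∉ T := fun hc => lt_irrefl c (h c hc)
  have hrow : ∀ b ≤ c, rowHookProd (insert c T) b = rowHookProd T b := fun b hb => by
    rw [rowHookProd, rowHookProd, sdiff_insert,
      erase_eq_of_notMem fun hmem => by simp at hmem; omega]
  rw [hookProd, prod_insert hc, hrow c le_rfl, mul_comm, hookProd]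
  exact congrArg (· * _) (prod_congr rfl fun b hb => hrow b (h b hb).le)

theorem rowHookProd_insert_mul_sub {T : Finset ℕ} {x y : ℕ} (hx : x ∉ T) (hxy : x < y) :
    rowHookProd (insert x T) y * (y - x) = rowHookProd T y := by
  rw [rowHookProd, rowHookProd, sdiff_insert,
    prod_erase_mul _ _ (mem_sdiff.2 ⟨mem_range.2 hxy, hx⟩)]

theorem rowHookProd_Ico_erase {s l : ℕ} (hs₀ : 0 < s) (hsl : s < l) {c : ℕ} (hc : l ≤ c) :
    rowHookProd ((Ico 1 l).erase s) c = c * (c - s) * (c - l)! := by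
  have hcompl : range c \ (Ico 1 l).erase s = insert 0 (insert s (Ico l c)) := by
    ext a; simp only [mem_sdiff, mem_range, mem_erase, mem_Ico, mem_insert]; omega
  rw [rowHookProd, hcompl, prod_insert (by simp; omega), prod_insert (by simp; omega),
    prod_Ico_sub_eq_factorial, Nat.sub_zero, mul_assoc]

theorem mul_hookProd_Ico_erase {s l : ℕ} (hs₀ : 0 < s) (hsl : s < l) :
    s * hookProd ((Ico 1 l).erase s) = (l - 1)! * (l - 1 - s)! := by
  have hrow : ∀ b ∈ (Ico 1 l).erase s,
      rowHookProd ((Ico 1 l).erase s) b = b * if s < b then b - s else 1 := by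
    intro b hb
    simp only [mem_erase, mem_Ico] at hb
    split_ifs with hsb
    · have hcompl : range b \ (Ico 1 l).erase s = {0, s} := by
        ext a; simp only [mem_sdiff, mem_range, mem_erase, mem_Ico, mem_insert, mem_singleton]
        omega
      rw [rowHookProd, hcompl, prod_pair (by omega), Nat.sub_zero]
    · have hcompl : range b \ (Ico 1 l).erase s = {0} := by
        ext a; simp only [mem_sdiff, mem_range, mem_erase, mem_Ico, mem_singleton]; omega
      rw [rowHookProd, hcompl, prod_singleton, Nat.sub_zero, mul_one]
  have hfilter : ((Ico 1 l).erase s).filter (s < ·) = Ico (s + 1) l := by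
    ext a; simp only [mem_filter, mem_erase, mem_Ico]; omega
  rw [hookProd, prod_congr rfl hrow, prod_mul_distrib, prod_ite, prod_const_one, mul_one,
    hfilter, prod_Ico_sub_left_eq_factorial, ← mul_assoc, mul_prod_erase _ (fun b => b)
    (by simp; omega), ← prod_Ico_id_eq_factorial (l - 1), Nat.sub_add_cancel (by omega)]

theorem hookProd_insert_insert_Ico_erase_mul {s l x y : ℕ} (hs₀ : 0 < s) (hsl : s < l)
    (hlx : l ≤ x) (hxy : x < y) :
    hookProd (insert y (insert x ((Ico 1 l).erase s))) * ((y - x) * s) =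
      y * (y - s) * x * (x - s) * (y - l)! * (x - l)! * (l - 1)! * (l - 1 - s)! := by
  have hA : ∀ a ∈ (Ico 1 l).erase s, a < x := fun a ha => by simp at ha; omega
  have hxA : x ∉ (Ico 1 l).erase s := fun h => lt_irrefl x (hA x h)
  have hxA' : ∀ a ∈ insert x ((Ico 1 l).erase s), a < y := fun a ha => by
    rcases mem_insert.1 ha with rfl | ha
    exacts [hxy, (hA a ha).trans hxy]
  rw [hookProd_insert_of_forall_lt hxA', hookProd_insert_of_forall_lt hA]
  calc _ = (s * hookProd ((Ico 1 l).erase s)) * rowHookProd ((Ico 1 l).erase s) x *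
        (rowHookProd (insert x ((Ico 1 l).erase s)) y * (y - x)) := by ring
    _ = _ := by
      rw [mul_hookProd_Ico_erase hs₀ hsl, rowHookProd_insert_mul_sub hxA hxy,
        rowHookProd_Ico_erase hs₀ hsl hlx, rowHookProd_Ico_erase hs₀ hsl (hlx.trans hxy.le)]
      ring

theorem sum_insert_insert_Ico_erase_add {s l x y : ℕ} (hs₀ : 0 < s) (hsl : s < l)
    (hlx : l ≤ x) (hxy : x < y) :
    ∑ b ∈ insert y (insert x ((Ico 1 l).erase s)), b + s =
      x + y + ∑ i ∈ range #(insert y (insert x ((Ico 1 l).erase s))), i := by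
  have hxA : x ∉ (Ico 1 l).erase s := by simp; omega
  have hyA : y ∉ insert x ((Ico 1 l).erase s) := by simp; omega
  have hsA : ∑ b ∈ (Ico 1 l).erase s, b + s = ∑ b ∈ Ico 1 l, b :=
    sum_erase_add _ _ (by simp; omega)
  have hrange : ∑ i ∈ range l, i = ∑ i ∈ Ico 1 l, i := by
    rw [range_eq_Ico, sum_eq_sum_Ico_succ_bot (by omega), zero_add]
  rw [card_insert_of_notMem hyA, card_insert_of_notMem hxA, card_erase_of_mem (by simp; omega),
    Nat.card_Ico, show l - 1 - 1 + 1 + 1 = l by omega, hrange, sum_insert hyA, sum_insert hxA,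
    ← hsA]
  ring

theorem betaSet_nearHook (μ₁ μ₂ : ℕ) {r l : ℕ} (hr : 2 ≤ r) (hrl : r ≤ l) :
    betaSet (μ₁ :: μ₂ :: (List.replicate (r - 2) 2 ++ List.replicate (l - r) 1)) =
      insert (μ₁ + l - 1) (insert (μ₂ + l - 2) ((Ico 1 l).erase (l - r + 1))) := by
  rw [betaSet_cons, betaSet_cons, betaSet_append, betaSet_replicate, betaSet_replicate,
    image_add_right_Ico]
  simp only [List.length_cons, List.length_append, List.length_replicate]
  congr 2
  · omega
  · omega
  · ext a; simp only [mem_union, mem_Ico, mem_erase]; omega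

theorem sum_betaSet_nearHook {n μ₁ μ₂ r l : ℕ} (h12 : μ₂ ≤ μ₁) (h2 : 2 ≤ μ₂) (hr : 2 ≤ r)
    (hrl : r ≤ l) (hsum : μ₁ + μ₂ + 2 * (r - 2) + (l - r) = n) :
    ∑ b ∈ betaSet (μ₁ :: μ₂ :: (List.replicate (r - 2) 2 ++ List.replicate (l - r) 1)), b =
      n + ∑ i ∈ range #(betaSet
        (μ₁ :: μ₂ :: (List.replicate (r - 2) 2 ++ List.replicate (l - r) 1))), i := by
  have hsize := sum_insert_insert_Ico_erase_add (s := l - r + 1) (l := l) (x := μ₂ + l - 2)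
    (y := μ₁ + l - 1) (by omega) (by omega) (by omega) (by omega)
  rw [betaSet_nearHook μ₁ μ₂ hr hrl]
  omega

theorem cast_hookProd_betaSet_nearHook {μ₁ μ₂ r l : ℕ} (h12 : μ₂ ≤ μ₁) (h2 : 2 ≤ μ₂)
    (hr : 2 ≤ r) (hrl : r ≤ l) :
    (hookProd (betaSet (μ₁ :: μ₂ :: (List.replicate (r - 2) 2 ++ List.replicate (l - r) 1))) : ℚ)
        * (((μ₁ : ℚ) - μ₂ + 1) * ((l : ℚ) - r + 1)) =
      ((μ₁ : ℚ) + l - 1) * ((μ₁ : ℚ) + r - 2) * ((μ₂ : ℚ) + l - 2) * ((μ₂ : ℚ) + r - 3) *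
        (μ₁ - 1)! * (μ₂ - 2)! * (l - 1)! * (r - 2)! := by
  have hhook := hookProd_insert_insert_Ico_erase_mul (s := l - r + 1) (l := l) (x := μ₂ + l - 2)
    (y := μ₁ + l - 1) (by omega) (by omega) (by omega) (by omega)
  rw [show μ₁ + l - 1 - (μ₂ + l - 2) = μ₁ - μ₂ + 1 by omega,
    show μ₁ + l - 1 - (l - r + 1) = μ₁ + r - 2 by omega,
    show μ₂ + l - 2 - (l - r + 1) = μ₂ + r - 3 by omega, show μ₁ + l - 1 - l = μ₁ - 1 by omega,
    show μ₂ + l - 2 - l = μ₂ - 2 by omega, show l - 1 - (l - r + 1) = r - 2 by omega] at hhook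
  have hhookQ := congrArg (Nat.cast : ℕ → ℚ) hhook
  push_cast [Nat.cast_sub h12, Nat.cast_sub hrl, Nat.cast_sub (by omega : 1 ≤ μ₁ + l),
    Nat.cast_sub (by omega : 2 ≤ μ₁ + r), Nat.cast_sub (by omega : 2 ≤ μ₂ + l),
    Nat.cast_sub (by omega : 3 ≤ μ₂ + r)] at hhookQ
  rwa [betaSet_nearHook μ₁ μ₂ hr hrl]

/-- Hook-length formula for near-hooks: the dimension of the irrep of `S_n` indexed by
`λ = (μ₁, μ₂, 2^{r-2}, 1^{l-r})` with `μ₁ ≥ μ₂ ≥ 2` and `l ≥ r ≥ 2` equals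
`n!·(μ₁-μ₂+1)·(l-r+1) / [(μ₁+l-1)(μ₁+r-2)(μ₂+l-2)(μ₂+r-3)·(μ₁-1)!·(μ₂-2)!·(l-1)!·(r-2)!]`. -/
theorem stmt_3 (n μ₁ μ₂ r l : ℕ) (h12 : μ₂ ≤ μ₁) (h2 : 2 ≤ μ₂) (hr : 2 ≤ r) (hrl : r ≤ l)
    (hsum : μ₁ + μ₂ + 2 * (r - 2) + (l - r) = n) :
    (MN (List.replicate n 1)
        (betaSet (μ₁ :: μ₂ :: (List.replicate (r - 2) 2 ++ List.replicate (l - r) 1))) : ℚ)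
      = (n.factorial : ℚ) * ((μ₁ : ℚ) - μ₂ + 1) * ((l : ℚ) - r + 1) /
        (((μ₁ : ℚ) + l - 1) * ((μ₁ : ℚ) + r - 2) * ((μ₂ : ℚ) + l - 2) * ((μ₂ : ℚ) + r - 3) *
          (μ₁ - 1).factorial * (μ₂ - 2).factorial * (l - 1).factorial * (r - 2).factorial) := by
  have h12Q : (μ₂ : ℚ) ≤ μ₁ := by exact_mod_cast h12
  have hrlQ : (r : ℚ) ≤ l := by exact_mod_cast hrl
  rw [MN_replicate_one_eq_factorial_div_hookProd n _ (sum_betaSet_nearHook h12 h2 hr hrl hsum),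
    ← cast_hookProd_betaSet_nearHook h12 h2 hr hrl, mul_assoc,
    mul_div_mul_right _ _ (mul_ne_zero (by linarith) (by linarith))]
end

section
/- If τ is a permutation of S_n whose cycle type is not of the form (l, n-l) for some 1 ≤ l < n (i.e., τ does not have exactly two cycles), then the product of τ with any transposition is never an n-cycle. Conversely, if στ is an n-cycle for some transposition σ, then τ has exactly two cycles, of lengths l and n-l for some l. -/
/-- The full cycle type of a permutation of \`Fin n\`: the cycle lengths including the
fixed points counted as cycles of length 1. -/
def fullCycleType {n : ℕ} (τ : Equiv.Perm (Fin n)) : Multiset ℕ :=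
  τ.cycleType + Multiset.replicate (n - τ.cycleType.sum) 1

/-!
Write `c = σ τ` with `σ = (x y)`. Since `τ = σ c` and `c` is an `n`-cycle, every point lies in the
`τ`-cycle of `x` or of `y`, so `τ` has at most two cycles (fixed points count as cycles: these are
the parts of `τ.partition`). On the other hand a permutation of `n` points with `k` cycles has sign
`(-1)^(n + k)`, and `sign τ = -sign c = (-1)^n` forces `k` to be even. Hence `τ` has exactly two
cycles, whose lengths add up to `n`.
-/

open Finset

namespace Equiv.Perm

variable {α : Type*} [Fintype α] [DecidableEq α]

theorem sign_eq_neg_one_pow_card_add_card_parts (σ : Perm α) :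
    sign σ = (-1) ^ (Fintype.card α + Multiset.card σ.partition.parts) := by
  obtain ⟨k, hk⟩ : ∃ k, Fintype.card α = σ.cycleType.sum + k :=
    Nat.exists_eq_add_of_le (σ.sum_cycleType ▸ σ.support.card_le_univ)
  have hfix : Fintype.card α - #σ.support = k := by rw [← sum_cycleType]; omega
  rw [sign_of_cycleType, parts_partition, Multiset.card_add, Multiset.card_replicate, hfix,
    show Fintype.card α + (Multiset.card σ.cycleType + k)
      = σ.cycleType.sum + Multiset.card σ.cycleType + 2 * k by omega,
    pow_add _ _ (2 * k), pow_mul, neg_one_sq, one_pow, mul_one]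

theorem card_parts_partition_le (σ : Perm α) (s : Finset α)
    (hs : ∀ z, ∃ a ∈ s, σ.SameCycle a z) :
    Multiset.card σ.partition.parts ≤ #s := by
  have hfactors : σ.cycleFactorsFinset ⊆ (s.filter (· ∈ σ.support)).image σ.cycleOf := by
    intro g hg
    obtain ⟨⟨z, hz, -⟩, hgσ⟩ := mem_cycleFactorsFinset_iff.1 hg
    obtain ⟨a, ha, haz⟩ := hs z
    have hzσ : z ∈ σ.support := mem_support.2 (hgσ z (mem_support.2 hz) ▸ hz)
    refine mem_image.2 ⟨a, mem_filter.2 ⟨ha, haz.mem_support_iff.2 hzσ⟩, ?_⟩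
    rw [haz.cycleOf_eq, cycle_is_cycleOf (mem_support.2 hz) hg]
  have hfixed : σ.supportᶜ ⊆ s.filter (· ∉ σ.support) := by
    intro z hz
    obtain ⟨a, ha, haz⟩ := hs z
    have hz' : σ z = z := notMem_support.1 (mem_compl.1 hz)
    obtain rfl := haz.eq_of_right hz'
    exact mem_filter.2 ⟨ha, mem_compl.1 hz⟩
  calc Multiset.card σ.partition.parts
      = #σ.cycleFactorsFinset + #σ.supportᶜ := by
        rw [parts_partition, Multiset.card_add, Multiset.card_replicate, cycleType_def,
          Multiset.card_map, ← card_compl]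
        rfl
    _ ≤ #(s.filter (· ∈ σ.support)) + #(s.filter (· ∉ σ.support)) :=
        add_le_add ((card_le_card hfactors).trans card_image_le) (card_le_card hfixed)
    _ = #s := card_filter_add_card_filter_not _

theorem sameCycle_or_sameCycle_of_swap_mul {f : Perm α} {x y z : α}
    (h : (swap x y * f).SameCycle x z) : f.SameCycle x z ∨ f.SameCycle y z := by
  obtain ⟨i, -, rfl⟩ := h.exists_pow_eq'
  clear h
  induction i with
  | zero => exact Or.inl (SameCycle.refl f x)
  | succ i ih =>
    rw [pow_succ', mul_apply, mul_apply]
    by_cases hx : f (((swap x y * f) ^ i) x) = x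
    · exact Or.inr (by rw [hx, swap_apply_left])
    by_cases hy : f (((swap x y * f) ^ i) x) = y
    · exact Or.inl (by rw [hy, swap_apply_right])
    rw [swap_apply_of_ne_of_ne hx hy]
    exact ih.imp sameCycle_apply_right.2 sameCycle_apply_right.2

theorem exists_partition_parts_eq_pair_of_isSwap_mul {σ τ : Perm α} (hσ : σ.IsSwap)
    (h : (σ * τ).cycleType = {Fintype.card α}) :
    ∃ l, 1 ≤ l ∧ l < Fintype.card α ∧ τ.partition.parts = {l, Fintype.card α - l} := by
  obtain ⟨x, y, hxy, rfl⟩ := hσ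
  set c := swap x y * τ
  have hc : c.IsCycle := card_cycleType_eq_one.1 (by rw [h]; rfl)
  have hc_support : c.support = univ :=
    eq_univ_of_card _ (by rw [← sum_cycleType, h, Multiset.sum_singleton])
  have hcover : ∀ z, ∃ a ∈ ({x, y} : Finset α), τ.SameCycle a z := fun z => by
    have hxz : c.SameCycle x z := hc.sameCycle (mem_support.1 (hc_support ▸ mem_univ x))
      (mem_support.1 (hc_support ▸ mem_univ z))
    rcases sameCycle_or_sameCycle_of_swap_mul hxz with hx | hy
    · exact ⟨x, mem_insert_self x {y}, hx⟩
    · exact ⟨y, mem_insert_of_mem (mem_singleton_self y), hy⟩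
  set k := Multiset.card τ.partition.parts
  have hk_le : k ≤ 2 := (card_parts_partition_le τ _ hcover).trans card_le_two
  have hk_pos : 0 < k := by
    refine Multiset.card_pos.2 fun h0 => ?_
    have := τ.partition.parts_sum
    rw [h0, Multiset.sum_zero] at this
    exact (Fintype.card_pos_iff.2 ⟨x⟩).ne this
  have hk_even : (-1 : ℤˣ) ^ k = 1 := by
    have hsign : sign τ = -sign c := by
      rw [show τ = swap x y * c by rw [← mul_assoc, swap_mul_self, one_mul], sign_mul,
        sign_swap hxy, neg_one_mul]
    rw [sign_eq_neg_one_pow_card_add_card_parts, sign_of_cycleType, h, Multiset.sum_singleton,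
      Multiset.card_singleton, pow_add, pow_add, pow_one, mul_neg_one, neg_neg] at hsign
    exact mul_eq_left.1 hsign
  obtain ⟨m, hm⟩ := (neg_one_pow_eq_one_iff_even (by decide)).1 hk_even
  obtain ⟨a, b, hab⟩ := Multiset.card_eq_two.1 (show k = 2 by omega)
  have hsum : a + b = Fintype.card α := by
    simpa [hab] using τ.partition.parts_sum
  have ha : 0 < a := τ.partition.parts_pos (by simp [hab])
  have hb : 0 < b := τ.partition.parts_pos (by simp [hab])
  exact ⟨a, ha, by omega, by rw [hab, show Fintype.card α - a = b by omega]⟩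

end Equiv.Perm

theorem fullCycleType_eq_parts_partition {n : ℕ} (τ : Equiv.Perm (Fin n)) :
    fullCycleType τ = τ.partition.parts := by
  rw [fullCycleType, Equiv.Perm.parts_partition, Equiv.Perm.sum_cycleType, Fintype.card_fin]

theorem stmt_10_general (n : ℕ) (τ : Equiv.Perm (Fin n)) :
    ((¬ ∃ l : ℕ, 1 ≤ l ∧ l < n ∧ fullCycleType τ = {l, n - l}) →
      ∀ σ : Equiv.Perm (Fin n), σ.IsSwap → (σ * τ).cycleType ≠ {n}) ∧
    (∀ σ : Equiv.Perm (Fin n), σ.IsSwap → (σ * τ).cycleType = {n} →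
      ∃ l : ℕ, 1 ≤ l ∧ l < n ∧ fullCycleType τ = {l, n - l}) := by
  have two_cycles : ∀ σ : Equiv.Perm (Fin n), σ.IsSwap → (σ * τ).cycleType = {n} →
      ∃ l : ℕ, 1 ≤ l ∧ l < n ∧ fullCycleType τ = {l, n - l} := fun σ hσ h => by
    simpa only [fullCycleType_eq_parts_partition, Fintype.card_fin] using
      Equiv.Perm.exists_partition_parts_eq_pair_of_isSwap_mul hσ (by rwa [Fintype.card_fin])
  exact ⟨fun hne σ hσ h => hne (two_cycles σ hσ h), two_cycles⟩

/-- A product of a transposition with `τ` can be an `n`-cycle only if `τ` has exactly two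
cycles, of lengths `l` and `n-l`; and conversely. -/
theorem stmt_10 (n : ℕ) (hn : 2 ≤ n) (τ : Equiv.Perm (Fin n)) :
    ((¬ ∃ l : ℕ, 1 ≤ l ∧ l < n ∧ fullCycleType τ = {l, n - l}) →
      ∀ σ : Equiv.Perm (Fin n), σ.IsSwap → (σ * τ).cycleType ≠ {n}) ∧
    (∀ σ : Equiv.Perm (Fin n), σ.IsSwap → (σ * τ).cycleType = {n} →
      ∃ l : ℕ, 1 ≤ l ∧ l < n ∧ fullCycleType τ = {l, n - l}) :=
  stmt_10_general n τ
end
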